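/- Let α ∈ (0,1), let f satisfy assumption A1 with constant λ ≥ 0, and suppose in addition there are constants σ₁ ≤ 0 ≤ σ₂ with f(t, σ₁) ≤ 0 and f(t, σ₂) ≥ 0 for all t ∈ [0,T]. Let the temporal mesh satisfy λ τ_j^α < 1/Γ(2−α) for all j, and let σ₁ ≤ u₀ ≤ σ₂. Then the unique sequence (U^m)_{m=0}^M with U⁰ = u₀ and δ_t^α U^m + f(t_m, U^m) = 0 for all m = 1,…,M satisfies σ₁ ≤ U^m ≤ σ₂ for all m = 0,…,M. -/

import Mathlib

/-!
Let `b j = l1Weight α t m j` be `1 - α` times the mean of the kernel `(t_m - s)^(-α)` over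
`[t_{j-1}, t_j]`. Then `δU^m = Γ(2-α)⁻¹ ∑ b j (U^j - U^{j-1})`. The weights are secant slopes
of the concave map `x ↦ x^(1-α)`, hence positive and nondecreasing in `j`, and `b m = τ_m^(-α)`.
Summation by parts then shows that `U^j ≤ σ` for `j < m` forces
`δU^m ≥ τ_m^(-α) / Γ(2-α) · (U^m - σ)`. If `U^m > σ₂`, the scheme together with A1 and
`f(t_m, σ₂) ≥ 0` gives `δU^m ≤ λ (U^m - σ₂)`, contradicting `λ τ_m^α < 1 / Γ(2-α)`.
The lower bound is the upper bound for `-U`, which solves the scheme for `-f(t, -s)`.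
-/

open Real MeasureTheory

/-- The L1 discrete Caputo operator of order `α` on the temporal mesh `t`. -/
noncomputable def deltaL1 (α : ℝ) (t : ℕ → ℝ) (V : ℕ → ℝ) (m : ℕ) : ℝ :=
  (1 / Real.Gamma (1 - α)) *
    ∑ j ∈ Finset.Icc 1 m,
      ((V j - V (j - 1)) / (t j - t (j - 1))) *
        ∫ s in (t (j - 1))..(t j), (t m - s) ^ (-α)

open Finset

lemma integral_sub_rpow_neg {α : ℝ} (hα : α < 1) (a b c : ℝ) :
    ∫ s in a..b, (c - s) ^ (-α) = ((c - a) ^ (1 - α) - (c - b) ^ (1 - α)) / (1 - α) := by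
  rw [intervalIntegral.integral_comp_sub_left (fun x : ℝ => x ^ (-α)) c,
    integral_rpow (Or.inl (by linarith)), neg_add_eq_sub]

lemma Gamma_two_sub {α : ℝ} (hα : α < 1) : Gamma (2 - α) = (1 - α) * Gamma (1 - α) := by
  rw [show 2 - α = (1 - α) + 1 by ring, Gamma_add_one (by linarith)]

noncomputable def l1Weight (α : ℝ) (t : ℕ → ℝ) (m j : ℕ) : ℝ :=
  ((t m - t (j - 1)) ^ (1 - α) - (t m - t j) ^ (1 - α)) / (t j - t (j - 1))

lemma deltaL1_eq_sum_l1Weight {α : ℝ} (hα : α < 1) (t V : ℕ → ℝ) (m : ℕ) :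
    deltaL1 α t V m =
      (∑ j ∈ Icc 1 m, l1Weight α t m j * (V j - V (j - 1))) / Gamma (2 - α) := by
  simp only [deltaL1, l1Weight, integral_sub_rpow_neg hα, Gamma_two_sub hα, sum_div, mul_sum]
  refine sum_congr rfl fun j _ => ?_
  simp only [div_eq_mul_inv, mul_inv]
  ring

section Weights

variable {α : ℝ} {t : ℕ → ℝ} {m : ℕ}

lemma l1Weight_self (hα : α < 1) (h : t (m - 1) < t m) :
    l1Weight α t m m = (t m - t (m - 1)) ^ (-α) := by
  rw [l1Weight, sub_self, zero_rpow (by linarith), sub_zero,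
    show -α = (1 - α) - 1 by ring, rpow_sub_one (by linarith)]

lemma l1Weight_pos (hα : α < 1) (ht : StrictMonoOn t (Set.Iic m)) {j : ℕ} (hj : 1 ≤ j)
    (hjm : j ≤ m) : 0 < l1Weight α t m j := by
  have hτ : t (j - 1) < t j := ht (by simp; omega) (by simpa using hjm) (by omega)
  have hjm' : t j ≤ t m := ht.monotoneOn (by simpa using hjm) (by simp) hjm
  refine div_pos (sub_pos.mpr ?_) (sub_pos.mpr hτ)
  exact rpow_lt_rpow (by linarith) (by linarith) (by linarith)

lemma l1Weight_le_succ (hα₀ : 0 ≤ α) (hα₁ : α ≤ 1) (ht : StrictMonoOn t (Set.Iic m))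
    {j : ℕ} (hj : 1 ≤ j) (hjm : j + 1 ≤ m) : l1Weight α t m j ≤ l1Weight α t m (j + 1) := by
  have h₁ : t (j - 1) < t j := ht (by simp; omega) (by simp; omega) (by omega)
  have h₂ : t j < t (j + 1) := ht (by simp; omega) (by simpa using hjm) (by omega)
  have h₃ : t (j + 1) ≤ t m := ht.monotoneOn (by simpa using hjm) (by simp) hjm
  have := (concaveOn_rpow (p := 1 - α) (by linarith) (by linarith)).slope_anti_adjacent
    (show t m - t (j + 1) ∈ Set.Ici 0 by simp; linarith)
    (show t m - t (j - 1) ∈ Set.Ici 0 by simp; linarith)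
    (by linarith : t m - t (j + 1) < t m - t j) (by linarith : t m - t j < t m - t (j - 1))
  rw [sub_sub_sub_cancel_left, sub_sub_sub_cancel_left] at this
  simpa [l1Weight] using this

end Weights

lemma mul_le_sum_mul_sub {b V : ℕ → ℝ} {m : ℕ} (hm : 1 ≤ m) (hb : 0 ≤ b 1)
    (hb_succ : ∀ j, 1 ≤ j → j + 1 ≤ m → b j ≤ b (j + 1)) (hV : ∀ j < m, V j ≤ 0) :
    b m * V m ≤ ∑ j ∈ Icc 1 m, b j * (V j - V (j - 1)) := by
  induction m, hm using Nat.le_induction with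
  | base =>
    simp only [Icc_self, sum_singleton, Nat.sub_self]
    nlinarith [hV 0 one_pos]
  | succ n hn ih =>
    rw [sum_Icc_succ_top (by omega), Nat.add_sub_cancel]
    have hsum := ih (fun j hj hjn => hb_succ j hj (by omega)) (fun j hj => hV j (by omega))
    have hbn := hb_succ n hn le_rfl
    nlinarith [hV n (by omega)]

lemma rpow_neg_div_mul_sub_le_deltaL1 {α σ : ℝ} {t U : ℕ → ℝ} {m : ℕ} (hα₀ : 0 ≤ α)
    (hα₁ : α < 1) (ht : StrictMonoOn t (Set.Iic m)) (hm : 1 ≤ m) (hU : ∀ j < m, U j ≤ σ) :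
    (t m - t (m - 1)) ^ (-α) / Gamma (2 - α) * (U m - σ) ≤ deltaL1 α t U m := by
  rw [deltaL1_eq_sum_l1Weight hα₁, div_mul_eq_mul_div,
    ← l1Weight_self hα₁ (ht (by simp) (by simp) (by omega))]
  refine div_le_div_of_nonneg_right ?_ (Gamma_pos_of_pos (by linarith)).le
  calc l1Weight α t m m * (U m - σ)
      ≤ ∑ j ∈ Icc 1 m, l1Weight α t m j * ((U j - σ) - (U (j - 1) - σ)) :=
        mul_le_sum_mul_sub hm (l1Weight_pos hα₁ ht le_rfl hm).le
          (fun j hj hjm => l1Weight_le_succ hα₀ hα₁.le ht hj hjm)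
          (fun j hj => sub_nonpos.mpr (hU j hj))
    _ = ∑ j ∈ Icc 1 m, l1Weight α t m j * (U j - U (j - 1)) := by
        simp only [sub_sub_sub_cancel_right]

lemma deltaL1_neg (α : ℝ) (t U : ℕ → ℝ) (m : ℕ) :
    deltaL1 α t (fun j => -U j) m = -deltaL1 α t U m := by
  rw [deltaL1, deltaL1, ← mul_neg, ← sum_neg_distrib]
  congr 1
  refine sum_congr rfl fun j _ => ?_
  ring

lemma le_of_deltaL1_add_eq_zero {α lam σ : ℝ} {f : ℝ → ℝ → ℝ} {t U : ℕ → ℝ} {M : ℕ}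
    (hα : α ∈ Set.Ioo 0 1) (hf : ∀ t' s, σ ≤ s → f t' s - f t' σ ≥ -lam * (s - σ))
    (hfσ : ∀ t' ∈ Set.Icc (t 0) (t M), 0 ≤ f t' σ) (ht : StrictMonoOn t (Set.Iic M))
    (hmesh : ∀ m, 1 ≤ m → m ≤ M → lam * (t m - t (m - 1)) ^ α < 1 / Gamma (2 - α))
    (hU0 : U 0 ≤ σ) (hU : ∀ m, 1 ≤ m → m ≤ M → deltaL1 α t U m + f (t m) (U m) = 0) :
    ∀ m ≤ M, U m ≤ σ := by
  intro m
  induction m using Nat.strong_induction_on with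
  | _ m ih =>
    intro hmM
    rcases Nat.eq_zero_or_pos m with rfl | hm
    · exact hU0
    by_contra! hσ
    have htm : StrictMonoOn t (Set.Iic m) := ht.mono (Set.Iic_subset_Iic.mpr hmM)
    have hτ : 0 < t m - t (m - 1) := sub_pos.mpr (htm (by simp) (by simp) (by omega))
    have hlower := rpow_neg_div_mul_sub_le_deltaL1 hα.1.le hα.2 htm hm
      (fun j hj => ih j hj (by omega))
    have hupper : deltaL1 α t U m ≤ lam * (U m - σ) := by
      have htm_mem : t m ∈ Set.Icc (t 0) (t M) :=
        ⟨ht.monotoneOn (by simp) (by simpa using hmM) (Nat.zero_le m),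
          ht.monotoneOn (by simpa using hmM) (by simp) hmM⟩
      linarith [hf (t m) (U m) hσ.le, hfσ (t m) htm_mem, hU m hm hmM]
    have hrate : (t m - t (m - 1)) ^ (-α) / Gamma (2 - α) ≤ lam :=
      le_of_mul_le_mul_right (hlower.trans hupper) (sub_pos.mpr hσ)
    refine (hmesh m hm hmM).not_ge ?_
    calc 1 / Gamma (2 - α)
        = (t m - t (m - 1)) ^ (-α) / Gamma (2 - α) * (t m - t (m - 1)) ^ α := by
          rw [div_mul_eq_mul_div, ← rpow_add hτ, neg_add_cancel, rpow_zero]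
      _ ≤ lam * (t m - t (m - 1)) ^ α := by gcongr

theorem stmt10_general
    (α T lam σ₁ σ₂ : ℝ) (hα : α ∈ Set.Ioo (0 : ℝ) 1)
    (f : ℝ → ℝ → ℝ)
    (hfA1 : ∀ t' s₁ s₂, s₂ ≤ s₁ → f t' s₁ - f t' s₂ ≥ -lam * (s₁ - s₂))
    (hfσ₁ : ∀ t' ∈ Set.Icc (0 : ℝ) T, f t' σ₁ ≤ 0)
    (hfσ₂ : ∀ t' ∈ Set.Icc (0 : ℝ) T, 0 ≤ f t' σ₂)
    (M : ℕ) (t : ℕ → ℝ)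
    (ht0 : t 0 = 0) (htM : t M = T)
    (hmono : ∀ j, j < M → t j < t (j + 1))
    (hmesh : ∀ j, 1 ≤ j → j ≤ M →
      lam * (t j - t (j - 1)) ^ α < 1 / Real.Gamma (2 - α))
    (u₀ : ℝ) (hu₀ : σ₁ ≤ u₀ ∧ u₀ ≤ σ₂)
    (U : ℕ → ℝ)
    (hU0 : U 0 = u₀)
    (hU : ∀ m, 1 ≤ m → m ≤ M → deltaL1 α t U m + f (t m) (U m) = 0) :
    ∀ m, m ≤ M → σ₁ ≤ U m ∧ U m ≤ σ₂ := by
  have ht : StrictMonoOn t (Set.Iic M) := strictMonoOn_Iic_of_lt_succ hmono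
  have hlower := le_of_deltaL1_add_eq_zero (f := fun t' s => -f t' (-s)) (U := fun j => -U j)
    (σ := -σ₁) hα
    (fun t' s hs => by simp only [neg_neg]; linarith [hfA1 t' σ₁ (-s) (by linarith)])
    (fun t' ht' => by simpa using hfσ₁ t' (ht0 ▸ htM ▸ ht')) ht hmesh (by linarith [hu₀.1])
    (fun m hm hmM => by rw [deltaL1_neg, neg_neg]; linarith [hU m hm hmM])
  have hupper := le_of_deltaL1_add_eq_zero (f := f) hα (fun t' s hs => hfA1 t' s σ₂ hs)
    (by rwa [ht0, htM]) ht hmesh (by linarith [hu₀.2]) hU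
  exact fun m hm => ⟨neg_le_neg_iff.mp (hlower m hm), hupper m hm⟩

theorem stmt10
    (α T lam σ₁ σ₂ : ℝ) (hα : α ∈ Set.Ioo (0 : ℝ) 1) (hT : 0 < T) (hlam : 0 ≤ lam)
    (f : ℝ → ℝ → ℝ)
    (hfc : ∀ t', Continuous fun s => f t' s)
    (hfA1 : ∀ t' s₁ s₂, s₂ ≤ s₁ → f t' s₁ - f t' s₂ ≥ -lam * (s₁ - s₂))
    (hσ₁ : σ₁ ≤ 0) (hσ₂ : 0 ≤ σ₂)
    (hfσ₁ : ∀ t' ∈ Set.Icc (0 : ℝ) T, f t' σ₁ ≤ 0)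
    (hfσ₂ : ∀ t' ∈ Set.Icc (0 : ℝ) T, 0 ≤ f t' σ₂)
    (M : ℕ) (hM : 1 ≤ M) (t : ℕ → ℝ)
    (ht0 : t 0 = 0) (htM : t M = T)
    (hmono : ∀ j, j < M → t j < t (j + 1))
    (hmesh : ∀ j, 1 ≤ j → j ≤ M →
      lam * (t j - t (j - 1)) ^ α < 1 / Real.Gamma (2 - α))
    (u₀ : ℝ) (hu₀ : σ₁ ≤ u₀ ∧ u₀ ≤ σ₂)
    (U : ℕ → ℝ)
    (hU0 : U 0 = u₀)
    (hU : ∀ m, 1 ≤ m → m ≤ M → deltaL1 α t U m + f (t m) (U m) = 0) :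
    ∀ m, m ≤ M → σ₁ ≤ U m ∧ U m ≤ σ₂ :=
  stmt10_general α T lam σ₁ σ₂ hα f hfA1 hfσ₁ hfσ₂ M t ht0 htM hmono hmesh u₀ hu₀ U hU0 hU
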